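/- At a (1,ℓ)-fixed point (x,y) of F with cos x = 0 (i.e., x = π/2 or x = 3π/2) and ω = ω*_ℓ = 2ℓπ(δ-1)/(K·ln δ), the Jacobian matrix DF(x,y) is upper triangular with both eigenvalues equal to 1, and DF(x,y) is not the identity matrix. -/
import Mathlib


theorem BT_double_eigenvalue_one (K δ A lam : ℝ) (hK : 0 < K) (hδ : 1 < δ)
    (ℓ : ℕ) (hℓ : 1 ≤ ℓ) (x y ω : ℝ)
    (hω : ω = 2 * ℓ * Real.pi * (δ - 1) / (K * Real.log δ))
    (hcos : Real.cos x = 0)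
    (hu : y + A + lam * Real.sin x = Real.exp (-2 * ℓ * Real.pi / (K * ω)))
    (hy : y = Real.exp (-2 * ℓ * Real.pi * δ / (K * ω))) :
    (!![1 - K * ω * lam * Real.cos x / (y + A + lam * Real.sin x),
          -(K * ω) / (y + A + lam * Real.sin x);
        lam * δ * (y + A + lam * Real.sin x) ^ (δ - 1) * Real.cos x,
          δ * (y + A + lam * Real.sin x) ^ (δ - 1)]
      = !![1, -(K * ω) / (y + A + lam * Real.sin x); 0, 1]) ∧
    K * ω / (y + A + lam * Real.sin x) ≠ 0 ∧
    (!![1 - K * ω * lam * Real.cos x / (y + A + lam * Real.sin x),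
          -(K * ω) / (y + A + lam * Real.sin x);
        lam * δ * (y + A + lam * Real.sin x) ^ (δ - 1) * Real.cos x,
          δ * (y + A + lam * Real.sin x) ^ (δ - 1)]
      ≠ (1 : Matrix (Fin 2) (Fin 2) ℝ)) := by
  have hπ := Real.pi_pos
  have hℓR : (1:ℝ) ≤ (ℓ:ℝ) := by exact_mod_cast hℓ
  have hδ1 : (0:ℝ) < δ - 1 := by linarith
  have hlog : 0 < Real.log δ := Real.log_pos hδ
  have hnum : 0 < 2 * ℓ * Real.pi * (δ - 1) := by positivity
  have hω0 : 0 < ω := by rw [hω]; positivity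
  have hKω : 0 < K * ω := mul_pos hK hω0
  have hKωeq : K * ω = 2 * ℓ * Real.pi * (δ - 1) / Real.log δ := by
    rw [hω]; field_simp
  have hexp : -2 * ℓ * Real.pi / (K * ω) * (δ - 1) = -Real.log δ := by
    rw [hKωeq]
    field_simp
  have hupow : (y + A + lam * Real.sin x) ^ (δ - 1) = δ⁻¹ := by
    rw [hu, ← Real.exp_mul, hexp, Real.exp_neg, Real.exp_log (by linarith)]
  have hδu : δ * (y + A + lam * Real.sin x) ^ (δ - 1) = 1 := by
    rw [hupow]; field_simp
  have hune : 0 < y + A + lam * Real.sin x := by rw [hu]; exact Real.exp_pos _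
  have hne : K * ω / (y + A + lam * Real.sin x) ≠ 0 :=
    ne_of_gt (div_pos hKω hune)
  refine ⟨?_, hne, ?_⟩
  · ext i j
    fin_cases i <;> fin_cases j <;>
      simp [hcos, hδu]
  · intro h
    have := congrFun (congrFun h 0) 1
    simp [Matrix.one_apply] at this
    exact (neg_ne_zero.mpr hne) (by simpa using this)
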